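/- For every x ∈ ℝ, the limit as k → ∞ of √k · q_k(x) equals x²/2. -/

import Mathlib

/-!
With `u = 2x/√k` one has `√k · q_k(x) = (k/4)(1 - √(1+u²) + u · arsinh u)` and `k u²/4 = x²`.
Rationalising `1 - √(1+u²)` and writing `arsinh u = u · (dslope arsinh 0 u)` gives
`√k · q_k(x) = x² (dslope arsinh 0 u - 1/(1 + √(1+u²)))`; the bracket is continuous at `u = 0`,
where it equals `arsinh'(0) - 1/2 = 1/2`, and `u → 0` as `k → ∞`.
-/

/-- The implicit regularizer `q_k` of the diagonal linear network. -/
noncomputable def qk (k x : ℝ) : ℝ :=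
  Real.sqrt k / 4 * (1 - Real.sqrt (1 + 4 * x ^ 2 / k)
    + 2 * x / Real.sqrt k * Real.arsinh (2 * x / Real.sqrt k))

open Real Filter Topology

lemma one_sub_sqrt_one_add_sq_add_mul_arsinh (u : ℝ) :
    1 - √(1 + u ^ 2) + u * arsinh u = u ^ 2 * (dslope arsinh 0 u - (1 + √(1 + u ^ 2))⁻¹) := by
  have harsinh : u * dslope arsinh 0 u = arsinh u := by
    simpa [arsinh_zero] using sub_smul_dslope arsinh 0 u
  have hsq : √(1 + u ^ 2) ^ 2 = 1 + u ^ 2 := sq_sqrt (by positivity)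
  have hpos : 0 < 1 + √(1 + u ^ 2) := by positivity
  rw [← harsinh]
  field_simp
  linear_combination -hsq

lemma sqrt_mul_qk {k : ℝ} (hk : 0 < k) (x : ℝ) :
    √k * qk k x = x ^ 2 * (dslope arsinh 0 (2 * x / √k) - (1 + √(1 + (2 * x / √k) ^ 2))⁻¹) := by
  have hsqrt : √k ^ 2 = k := sq_sqrt hk.le
  have hu : (2 * x / √k) ^ 2 = 4 * x ^ 2 / k := by rw [div_pow, hsqrt]; ring
  have hscale : k / 4 * (2 * x / √k) ^ 2 = x ^ 2 := by rw [hu]; field_simp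
  rw [qk, ← hu, one_sub_sqrt_one_add_sq_add_mul_arsinh, ← hscale]
  linear_combination
    (2 * x / √k) ^ 2 * (dslope arsinh 0 (2 * x / √k) - (1 + √(1 + (2 * x / √k) ^ 2))⁻¹) / 4 * hsqrt

lemma continuousAt_dslope_arsinh_sub_inv :
    ContinuousAt (fun u => dslope arsinh 0 u - (1 + √(1 + u ^ 2))⁻¹) 0 :=
  (continuousAt_dslope_same.2 (differentiable_arsinh 0)).sub <|
    (continuousAt_const.add (by fun_prop)).inv₀ (by positivity : (1 : ℝ) + √(1 + 0 ^ 2) ≠ 0)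

lemma dslope_arsinh_sub_inv_zero :
    dslope arsinh 0 0 - (1 + √(1 + (0 : ℝ) ^ 2))⁻¹ = 1 / 2 := by
  rw [dslope_same, (hasDerivAt_arsinh 0).deriv]
  norm_num

/-- for every `x`, `√k · q_k(x) → x²/2` as `k → ∞`. -/
theorem stmt_5 (x : ℝ) :
    Filter.Tendsto (fun k => Real.sqrt k * qk k x)
      Filter.atTop (nhds (x ^ 2 / 2)) := by
  have hu : Tendsto (fun k : ℝ => 2 * x / √k) atTop (𝓝 0) :=
    tendsto_const_nhds.div_atTop tendsto_sqrt_atTop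
  have hlim := (continuousAt_dslope_arsinh_sub_inv.tendsto.comp hu).const_mul (x ^ 2)
  rw [dslope_arsinh_sub_inv_zero, ← div_eq_mul_one_div] at hlim
  refine hlim.congr' ?_
  filter_upwards [eventually_gt_atTop 0] with k hk
  exact (sqrt_mul_qk hk x).symm
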